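/- arXiv:1211.4566 — 2 statements merged into one kernel-verified Lean document; each statement's English description precedes it below -/
import Mathlib

section
/- Let (X, d) be a metric space, D ⊂ X a subset, and for δ > 0 let D_δ be the open δ-neighborhood of D. Suppose (d_i) is a sequence of metrics on X converging uniformly to d on compact subsets of X \ D_δ₁ for every δ₁ > 0, and suppose for every δ > 0 there exists δ₁ > 0 and i₀ such that for all i ≥ i₀, every point of D_{δ₁} is within d_i-distance δ/3 and within d-distance δ/3 of some point of X \ D_{δ₁}. Then for every δ > 0 and i sufficiently large, |d_i(x,y) - d(x,y)| < δ for all x, y ∈ X; in particular (X, d_i) converges to (X, d) in the Gromov-Hausdorff sense. -/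
open Set

/-- A distance function on X: nonnegative, vanishing on the diagonal, symmetric,
satisfying the triangle inequality. -/
def IsDistFun {X : Type*} (d : X → X → ℝ) : Prop :=
  (∀ x y, 0 ≤ d x y) ∧ (∀ x, d x x = 0) ∧ (∀ x y, d x y = d y x) ∧
  (∀ x y z, d x z ≤ d x y + d y z)

/-
Push `x` and `y` off the δ₁-neighbourhood of `D` to nearby points `x'`, `y'`, moving them by
little in both `d` and `dᵢ`. The triangle inequality for each metric bounds the resulting change of
`dᵢ - d` by those four small displacements, and at `(x', y')` the uniform convergence away from
`D` applies.
-/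

lemma IsDistFun.abs_sub_le {X : Type*} {d : X → X → ℝ} (hd : IsDistFun d) (x y x' y' : X) :
    |d x y - d x' y'| ≤ d x x' + d y y' := by
  obtain ⟨-, -, hsymm, htri⟩ := hd
  rw [abs_sub_le_iff]
  constructor
  · linarith [htri x x' y, htri x' y' y, hsymm y' y]
  · linarith [htri x' x y', htri x y y', hsymm x' x]

lemma IsDistFun.abs_sub_le_abs_sub_add {X : Type*} {d d' : X → X → ℝ} (hd : IsDistFun d)
    (hd' : IsDistFun d') (x y x' y' : X) :
    |d' x y - d x y| ≤ |d' x' y' - d x' y'| + (d' x x' + d' y y') + (d x x' + d y y') := by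
  have h' := hd'.abs_sub_le x y x' y'
  have h := hd.abs_sub_le x y x' y'
  rw [abs_sub_comm] at h
  linarith [_root_.abs_sub_le (d' x y) (d' x' y') (d x y),
    _root_.abs_sub_le (d' x' y') (d x' y') (d x y)]

theorem stmt4_general {X : Type*} (D : Set X)
    (d : X → X → ℝ) (di : ℕ → X → X → ℝ)
    (hd : IsDistFun d) (hdi : ∀ i, IsDistFun (di i))
    (hunif : ∀ δ₁ > (0:ℝ), ∀ η > (0:ℝ), ∃ N, ∀ i ≥ N, ∀ x y : X,
      x ∉ {z | ∃ w ∈ D, d z w < δ₁} → y ∉ {z | ∃ w ∈ D, d z w < δ₁} →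
      |di i x y - d x y| ≤ η)
    (hnbhd : ∀ δ > (0:ℝ), ∃ δ₁ > (0:ℝ), ∃ i₀, ∀ i ≥ i₀,
      ∀ x ∈ {z | ∃ w ∈ D, d z w < δ₁}, ∃ y, y ∉ {z | ∃ w ∈ D, d z w < δ₁} ∧
        di i x y ≤ δ / 3 ∧ d x y ≤ δ / 3) :
    ∀ δ > (0:ℝ), ∃ N, ∀ i ≥ N, ∀ x y : X, |di i x y - d x y| < δ := by
  intro δ hδ
  obtain ⟨δ₁, hδ₁, i₀, hi₀⟩ := hnbhd (δ / 2) (by linarith)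
  set U := {z | ∃ w ∈ D, d z w < δ₁}
  obtain ⟨N, hN⟩ := hunif δ₁ hδ₁ (δ / 4) (by linarith)
  refine ⟨max i₀ N, fun i hi x y => ?_⟩
  have displace : ∀ z, ∃ z' ∉ U, di i z z' ≤ δ / 6 ∧ d z z' ≤ δ / 6 := by
    intro z
    by_cases hz : z ∈ U
    · obtain ⟨z', hz', h₁, h₂⟩ := hi₀ i (le_of_max_le_left hi) z hz
      exact ⟨z', hz', by linarith, by linarith⟩
    · exact ⟨z, hz, by rw [(hdi i).2.1]; positivity, by rw [hd.2.1]; positivity⟩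
  obtain ⟨x', hx', hdix, hdx⟩ := displace x
  obtain ⟨y', hy', hdiy, hdy⟩ := displace y
  have hfar := hN i (le_of_max_le_right hi) x' y' hx' hy'
  linarith [hd.abs_sub_le_abs_sub_add (hdi i) x y x' y']

/-- X compact, D ⊆ X, D_δ the open δ-neighborhood of D for the metric d.
If the metrics d_i converge to d uniformly on the complement of every D_δ₁ (a compact
subset of X \ D), and if for every δ > 0 there are δ₁ > 0 and i₀ such that for i ≥ i₀
every point of D_{δ₁} is within d_i-distance δ/3 and within d-distance δ/3 of a point
of X \ D_{δ₁}, then d_i → d uniformly on X × X: ∀ δ > 0, |d_i(x,y) - d(x,y)| < δ for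
all x, y and all large i (whence Gromov-Hausdorff convergence). -/
theorem stmt4 {X : Type*} [TopologicalSpace X] [CompactSpace X] (D : Set X)
    (d : X → X → ℝ) (di : ℕ → X → X → ℝ)
    (hd : IsDistFun d) (hdi : ∀ i, IsDistFun (di i))
    (hunif : ∀ δ₁ > (0:ℝ), ∀ η > (0:ℝ), ∃ N, ∀ i ≥ N, ∀ x y : X,
      x ∉ {z | ∃ w ∈ D, d z w < δ₁} → y ∉ {z | ∃ w ∈ D, d z w < δ₁} →
      |di i x y - d x y| ≤ η)
    (hnbhd : ∀ δ > (0:ℝ), ∃ δ₁ > (0:ℝ), ∃ i₀, ∀ i ≥ i₀,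
      ∀ x ∈ {z | ∃ w ∈ D, d z w < δ₁}, ∃ y, y ∉ {z | ∃ w ∈ D, d z w < δ₁} ∧
        di i x y ≤ δ / 3 ∧ d x y ≤ δ / 3) :
    ∀ δ > (0:ℝ), ∃ N, ∀ i ≥ N, ∀ x y : X, |di i x y - d x y| < δ :=
  stmt4_general D d di hd hdi hunif hnbhd
end

section
/- Chern-Lu inequality with maximum principle: Let (X, ω) and (X, ω₀) be compact Kähler manifolds with Ric(ω) ≥ 0 and the holomorphic bisectional curvature of ω₀ bounded above by c₃. Let e = tr_ω ω₀ and suppose ω = ω₀ + √-1∂∂̄ψ with |ψ| ≤ c₂. If Δ_ω(log e - c₄ψ) ≥ c₅ e - c₆ with c₄, c₅ > 0, then e ≤ c₆' for a constant c₆' depending only on c₂, c₄, c₅, c₆; consequently ω ≥ (c₆')^{-1} ω₀. -/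
open Set

theorem le_mul_exp_of_isMaxOn_log_sub_mul {X : Type*} {e ψ : X → ℝ} {c c₂ : ℝ} (hc : 0 ≤ c)
    (he : ∀ x, 0 < e x) (hψ : ∀ x, |ψ x| ≤ c₂) {p : X}
    (hp : IsMaxOn (fun x => Real.log (e x) - c * ψ x) univ p) (x : X) :
    e x ≤ e p * Real.exp (2 * c * c₂) := by
  have hosc : ψ x - ψ p ≤ 2 * c₂ := by
    linarith [le_abs_self (ψ x), neg_abs_le (ψ p), hψ x, hψ p]
  have hlog : Real.log (e x) ≤ Real.log (e p) + 2 * c * c₂ := by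
    linarith [show Real.log (e x) - c * ψ x ≤ Real.log (e p) - c * ψ p from hp (mem_univ x),
      mul_le_mul_of_nonneg_left hosc hc]
  rwa [← Real.log_le_log_iff (he x) (mul_pos (he p) (Real.exp_pos _)), Real.log_mul (he p).ne'
    (Real.exp_pos _).ne', Real.log_exp]

theorem stmt12_general {X : Type*} [TopologicalSpace X] [CompactSpace X]
    (e ψ L : X → ℝ) (c₂ c₄ c₅ c₆ : ℝ)
    (hc₄ : 0 < c₄) (hc₅ : 0 < c₅)
    (he : Continuous e) (hψ : Continuous ψ)
    (hepos : ∀ x, 0 < e x) (hψb : ∀ x, |ψ x| ≤ c₂)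
    (hCL : ∀ x, c₅ * e x - c₆ ≤ L x)
    (hmax : ∀ p : X, IsMaxOn (fun x => Real.log (e x) - c₄ * ψ x) univ p → L p ≤ 0) :
    ∀ x, e x ≤ (c₆ / c₅) * Real.exp (2 * c₄ * c₂) := by
  intro x
  obtain ⟨p, -, hp⟩ := isCompact_univ.exists_isMaxOn ⟨x, mem_univ x⟩
    ((he.log fun x => (hepos x).ne').sub (continuous_const.mul hψ)).continuousOn
  have hep : e p ≤ c₆ / c₅ := by
    rw [le_div_iff₀ hc₅]
    linarith [hCL p, hmax p hp]
  calc e x ≤ e p * Real.exp (2 * c₄ * c₂) :=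
        le_mul_exp_of_isMaxOn_log_sub_mul hc₄.le hepos hψb hp x
    _ ≤ (c₆ / c₅) * Real.exp (2 * c₄ * c₂) := by gcongr

/-- Chern–Lu inequality, maximum principle step: X compact,
e = tr_ω ω₀ > 0, |ψ| ≤ c₂, and L = Δ_ω(log e - c₄ψ) satisfies the Chern–Lu
differential inequality L ≥ c₅ e - c₆ (which holds when Ric(ω) ≥ 0 and the
bisectional curvature of ω₀ is bounded above); at an interior maximum of
log e - c₄ψ one has L ≤ 0.  Conclusion: e ≤ (c₆/c₅)·exp(2c₄c₂) everywhere,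
i.e. ω ≥ (c₆')⁻¹ ω₀ with c₆' depending only on c₂, c₄, c₅, c₆. -/
theorem stmt12 {X : Type*} [TopologicalSpace X] [CompactSpace X] [Nonempty X]
    (e ψ L : X → ℝ) (c₂ c₄ c₅ c₆ : ℝ)
    (hc₂ : 0 ≤ c₂) (hc₄ : 0 < c₄) (hc₅ : 0 < c₅)
    (he : Continuous e) (hψ : Continuous ψ)
    (hepos : ∀ x, 0 < e x) (hψb : ∀ x, |ψ x| ≤ c₂)
    (hCL : ∀ x, c₅ * e x - c₆ ≤ L x)
    (hmax : ∀ p : X, IsMaxOn (fun x => Real.log (e x) - c₄ * ψ x) univ p → L p ≤ 0) :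
    ∀ x, e x ≤ (c₆ / c₅) * Real.exp (2 * c₄ * c₂) :=
  stmt12_general e ψ L c₂ c₄ c₅ c₆ hc₄ hc₅ he hψ hepos hψb hCL hmax
end
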